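/- Suppose S(A,b) ≠ ∅, and for each i let u^{i*} ∈ [0,1] be the minimum of {y ∈ [0,1] : ∑_j T_L(a_{ij}, y) ≥ b_i}. Set u* = max_i u^{i*}. Then the constant vector (u*,...,u*) is the greatest optimal solution of the minimax problem: minimize Z(x) = max_j x_j over x ∈ S(A,b). -/

import Mathlib

open Finset

noncomputable section

/-- Łukasiewicz t-norm. -/
def TL (a x : ℝ) : ℝ := max (a + x - 1) 0

/-- Solution set of the addition-Łukasiewicz system. -/
def Sset {m n : ℕ} (A : Fin m → Fin n → ℝ) (b : Fin m → ℝ) : Set (Fin n → ℝ) :=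
  {x | (∀ j, x j ∈ Set.Icc (0:ℝ) 1) ∧ ∀ i, b i ≤ ∑ j, TL (A i j) (x j)}

/-- Minimal solution. -/
def IsMinimalSol {m n : ℕ} (A : Fin m → Fin n → ℝ) (b : Fin m → ℝ) (x : Fin n → ℝ) : Prop :=
  x ∈ Sset A b ∧ ∀ y ∈ Sset A b, y ≤ x → y = x

/-- The set F_j(z). -/
def Fset {m n : ℕ} (A : Fin m → Fin n → ℝ) (b : Fin m → ℝ) (j : Fin n) (z : Fin n → ℝ) :
    Set ℝ :=
  {t | t ∈ Set.Icc (0:ℝ) 1 ∧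
    ∀ i, b i ≤ TL (A i j) t + ∑ k ∈ Finset.univ.erase j, TL (A i k) (z k)}

/-- Objective Z(x) = max_j x_j. -/
def Zf {n : ℕ} (x : Fin n → ℝ) : ℝ := ⨆ j, x j

/-- Optimal solution of the minimax problem. -/
def IsOptimal {m n : ℕ} (A : Fin m → Fin n → ℝ) (b : Fin m → ℝ) (x : Fin n → ℝ) : Prop :=
  x ∈ Sset A b ∧ ∀ y ∈ Sset A b, Zf x ≤ Zf y

/-!
The largest `us` of the single-row minima is feasible for every row, since `TL a` is
monotone. Conversely, if `y` is feasible then so is the constant `Zf y` in each row, again by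
monotonicity, so every row minimum, and hence `us`, is at most `Zf y`. Thus the constant vector `us`
attains the least objective value, and any optimal `y` satisfies `y j ≤ Zf y ≤ us`.
-/

theorem TL_monotone (a : ℝ) : Monotone (TL a) :=
  fun _ _ h => max_le_max (by linarith) le_rfl

section Zf

variable {n : ℕ}

theorem le_Zf (y : Fin n → ℝ) (j : Fin n) : y j ≤ Zf y :=
  le_ciSup (Finite.bddAbove_range y) j

-- `Real.iSup_le` needs no `Nonempty (Fin n)`: the empty supremum is `0`.
theorem Zf_le {y : Fin n → ℝ} {c : ℝ} (hy : ∀ j, y j ≤ c) (hc : 0 ≤ c) : Zf y ≤ c :=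
  Real.iSup_le hy hc

theorem Zf_mem_Icc {y : Fin n → ℝ} (hy : ∀ j, y j ∈ Set.Icc (0 : ℝ) 1) :
    Zf y ∈ Set.Icc (0 : ℝ) 1 :=
  ⟨Real.iSup_nonneg fun j => (hy j).1, Zf_le (fun j => (hy j).2) zero_le_one⟩

end Zf

section Rows

variable {m n : ℕ} {A : Fin m → Fin n → ℝ} {b : Fin m → ℝ}

theorem const_mem_Sset {u : Fin m → ℝ}
    (hu : ∀ i, u i ∈ {y ∈ Set.Icc (0 : ℝ) 1 | b i ≤ ∑ j, TL (A i j) y})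
    {c : ℝ} (hc : c ∈ Set.Icc (0 : ℝ) 1) (huc : ∀ i, u i ≤ c) :
    (fun _ : Fin n => c) ∈ Sset A b :=
  ⟨fun _ => hc, fun i =>
    (hu i).2.trans (sum_le_sum fun _ _ => TL_monotone _ (huc i))⟩

theorem le_Zf_of_mem_Sset {i : Fin m} {ui : ℝ}
    (hui : IsLeast {y ∈ Set.Icc (0 : ℝ) 1 | b i ≤ ∑ j, TL (A i j) y} ui)
    {y : Fin n → ℝ} (hy : y ∈ Sset A b) : ui ≤ Zf y :=
  hui.2 ⟨Zf_mem_Icc hy.1,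
    (hy.2 i).trans (sum_le_sum fun j _ => TL_monotone _ (le_Zf y j))⟩

end Rows

theorem stmt19_general {m n : ℕ} (hm : 0 < m)
    (A : Fin m → Fin n → ℝ) (b : Fin m → ℝ)
    (u : Fin m → ℝ)
    (hu : ∀ i, IsLeast {y ∈ Set.Icc (0:ℝ) 1 | b i ≤ ∑ j, TL (A i j) y} (u i))
    (us : ℝ)
    (hus : us = Finset.univ.sup'
      (Finset.univ_nonempty_iff.mpr (Fin.pos_iff_nonempty.mp hm)) u) :
    IsOptimal A b (fun _ : Fin n => us) ∧
      ∀ y, IsOptimal A b y → y ≤ fun _ : Fin n => us := by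
  have hui_le : ∀ i, u i ≤ us := fun i => hus ▸ le_sup' u (mem_univ i)
  have hus_mem : us ∈ Set.Icc (0 : ℝ) 1 :=
    ⟨(hu ⟨0, hm⟩).1.1.1.trans (hui_le _), hus ▸ sup'_le _ _ fun i _ => (hu i).1.1.2⟩
  have hfeas : (fun _ : Fin n => us) ∈ Sset A b :=
    const_mem_Sset (fun i => (hu i).1) hus_mem hui_le
  have hlower : ∀ y ∈ Sset A b, us ≤ Zf y := fun y hy =>
    hus ▸ sup'_le _ _ fun i _ => le_Zf_of_mem_Sset (hu i) hy
  have hZ : Zf (fun _ : Fin n => us) ≤ us := Zf_le (fun _ => le_rfl) hus_mem.1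
  refine ⟨⟨hfeas, fun y hy => hZ.trans (hlower y hy)⟩, fun y hy j => ?_⟩
  exact (le_Zf y j).trans ((hy.2 _ hfeas).trans hZ)

theorem stmt19 {m n : ℕ} (hm : 0 < m) (hn : 0 < n)
    (A : Fin m → Fin n → ℝ) (b : Fin m → ℝ)
    (hA : ∀ i j, A i j ∈ Set.Icc (0:ℝ) 1) (hb : ∀ i, 0 < b i)
    (hS : (Sset A b).Nonempty)
    (u : Fin m → ℝ)
    (hu : ∀ i, IsLeast {y ∈ Set.Icc (0:ℝ) 1 | b i ≤ ∑ j, TL (A i j) y} (u i))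
    (us : ℝ)
    (hus : us = Finset.univ.sup'
      (Finset.univ_nonempty_iff.mpr (Fin.pos_iff_nonempty.mp hm)) u) :
    IsOptimal A b (fun _ : Fin n => us) ∧
      ∀ y, IsOptimal A b y → y ≤ fun _ : Fin n => us :=
  stmt19_general hm A b u hu us hus
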